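/- arXiv:1110.6284 — 3 statements merged into one kernel-verified Lean document; each statement's English description precedes it below -/
import Mathlib

section
/- Let Q(t) = (3t⁴ - 119t³ + 3157t² - 7296t + 10368)/(16t²(t-2)²(t-27)²) and B₃ = -953/97200. Then, as an identity of rational functions over ℚ, Q(t) = (2/9)/t² + (3/16)/(t-2)² + (3/16)/(t-27)² + (59/288 + 25B₃/2)/t + (-59/288 - 27B₃/2)/(t-2) + B₃/(t-27). -/
/-- Partial fraction decomposition of the automorphic derivative of the Hauptmodul of
`X₁₀*(1)`: with `B₃ = -953/97200`,
`Q(t) = (3t⁴-119t³+3157t²-7296t+10368)/(16t²(t-2)²(t-27)²)` equals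
`(2/9)/t² + (3/16)/(t-2)² + (3/16)/(t-27)² + (59/288 + 25B₃/2)/t
  + (-59/288 - 27B₃/2)/(t-2) + B₃/(t-27)`. -/
theorem autoDeriv_X10_partial_fractions (t : ℚ) (h0 : t ≠ 0) (h2 : t ≠ 2) (h27 : t ≠ 27) :
    let B₃ : ℚ := -953 / 97200
    (3 * t ^ 4 - 119 * t ^ 3 + 3157 * t ^ 2 - 7296 * t + 10368)
        / (16 * t ^ 2 * (t - 2) ^ 2 * (t - 27) ^ 2)
      = (2 / 9) / t ^ 2 + (3 / 16) / (t - 2) ^ 2 + (3 / 16) / (t - 27) ^ 2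
        + (59 / 288 + 25 * B₃ / 2) / t + (-(59 / 288) - 27 * B₃ / 2) / (t - 2)
        + B₃ / (t - 27) := by
  have h2' : t - 2 ≠ 0 := sub_ne_zero.mpr h2
  have h27' : t - 27 ≠ 0 := sub_ne_zero.mpr h27
  field_simp
  ring
end

section
/- Let R(u) = 216(u-1)³/((u+1)²(9u² - 10u + 17)) and w(u) = 10/9 - u. Then the pair (t, s) = (R(u), R(w(u))) satisfies, as an identity of rational functions of u, the quartic relation t(25t + 192)³ + (7077888 + 2908160t - 12612480t² + 1674720t³ - 36750t⁴)s + (2764800 - 12612480t + 8025390t² - 798210t³ + 21609t⁴)s² + (360000 + 1674720t - 798210t² + 33614t³)s³ + (147t - 125)²s⁴ = 0. -/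
/-!
Both `t = R(u)` and `s = R(10/9 - u)` are quotients of polynomials in `u` whose denominators share
the quadratic factor `9u² - 10u + 17`, which is invariant under `u ↦ 10/9 - u`. Clearing the
denominators turns the modular equation into a polynomial identity in `u` (of degree 32), which
holds over every commutative ring and is verified by normalization.
-/

namespace X10Star

variable {K : Type*}

def hauptmodul [Field K] (x : K) : K :=
  216 * (x - 1) ^ 3 / ((x + 1) ^ 2 * (9 * x ^ 2 - 10 * x + 17))

def modularPoly3 [CommRing K] (t s : K) : K :=
  t * (25 * t + 192) ^ 3
    + (7077888 + 2908160 * t - 12612480 * t ^ 2 + 1674720 * t ^ 3 - 36750 * t ^ 4) * s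
    + (2764800 - 12612480 * t + 8025390 * t ^ 2 - 798210 * t ^ 3 + 21609 * t ^ 4) * s ^ 2
    + (360000 + 1674720 * t - 798210 * t ^ 2 + 33614 * t ^ 3) * s ^ 3
    + (147 * t - 125) ^ 2 * s ^ 4

/-- The bihomogenization of `modularPoly3` of bidegree `(4, 4)`, with `t = a / b` and `s = c / d`. -/
def modularPoly3Hom [CommRing K] (a b c d : K) : K :=
  a * (25 * a + 192 * b) ^ 3 * d ^ 4
    + (7077888 * b ^ 4 + 2908160 * a * b ^ 3 - 12612480 * a ^ 2 * b ^ 2 + 1674720 * a ^ 3 * b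
      - 36750 * a ^ 4) * c * d ^ 3
    + (2764800 * b ^ 4 - 12612480 * a * b ^ 3 + 8025390 * a ^ 2 * b ^ 2 - 798210 * a ^ 3 * b
      + 21609 * a ^ 4) * c ^ 2 * d ^ 2
    + (360000 * b ^ 4 + 1674720 * a * b ^ 3 - 798210 * a ^ 2 * b ^ 2 + 33614 * a ^ 3 * b)
      * c ^ 3 * d
    + (147 * a - 125 * b) ^ 2 * b ^ 2 * c ^ 4

theorem modularPoly3_div_div [Field K] (a c : K) {b d : K} (hb : b ≠ 0) (hd : d ≠ 0) :
    modularPoly3 (a / b) (c / d) = modularPoly3Hom a b c d / (b ^ 4 * d ^ 4) := by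
  unfold modularPoly3 modularPoly3Hom
  field_simp

theorem modularPoly3Hom_eq_zero [CommRing K] (u : K) :
    modularPoly3Hom (216 * (u - 1) ^ 3) ((u + 1) ^ 2 * (9 * u ^ 2 - 10 * u + 17))
      (24 * (1 - 9 * u) ^ 3) ((19 - 9 * u) ^ 2 * (9 * u ^ 2 - 10 * u + 17)) = 0 := by
  unfold modularPoly3Hom
  ring

/-- `216 (1/9 - u)³ / ((19/9 - u)² (9u² - 10u + 17))`, with numerator and denominator scaled by 81. -/
theorem hauptmodul_atkinLehner [Field K] [CharZero K] {u : K} (hu : 19 - 9 * u ≠ 0)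
    (hq : 9 * u ^ 2 - 10 * u + 17 ≠ 0) :
    hauptmodul (10 / 9 - u) = 24 * (1 - 9 * u) ^ 3 / ((19 - 9 * u) ^ 2 * (9 * u ^ 2 - 10 * u + 17)) := by
  have hw : 10 / 9 - u + 1 ≠ 0 := by
    contrapose! hu
    linear_combination 9 * hu
  have hqw : 9 * (10 / 9 - u) ^ 2 - 10 * (10 / 9 - u) + 17 ≠ 0 := by
    convert hq using 1
    ring
  unfold hauptmodul
  rw [div_eq_div_iff (by positivity) (by positivity)]
  ring

end X10Star

open X10Star in
/-- With `R(u) = 216(u-1)³/((u+1)²(9u² - 10u + 17))` and `w(u) = 10/9 - u`, the pair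
`(t, s) = (R(u), R(w(u)))` satisfies the level-3 modular equation for `X₁₀*(1)`, as an
identity of rational functions of `u`. -/
theorem modular_equation_level3_X10 (u : ℚ) (h1 : u ≠ -1) (h2 : u ≠ 19 / 9) :
    let R : ℚ → ℚ := fun x => 216 * (x - 1) ^ 3 / ((x + 1) ^ 2 * (9 * x ^ 2 - 10 * x + 17))
    let t := R u
    let s := R (10 / 9 - u)
    t * (25 * t + 192) ^ 3
      + (7077888 + 2908160 * t - 12612480 * t ^ 2 + 1674720 * t ^ 3 - 36750 * t ^ 4) * s
      + (2764800 - 12612480 * t + 8025390 * t ^ 2 - 798210 * t ^ 3 + 21609 * t ^ 4) * s ^ 2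
      + (360000 + 1674720 * t - 798210 * t ^ 2 + 33614 * t ^ 3) * s ^ 3
      + (147 * t - 125) ^ 2 * s ^ 4 = 0 := by
  show modularPoly3 (hauptmodul u) (hauptmodul (10 / 9 - u)) = 0
  have hq : 9 * u ^ 2 - 10 * u + 17 ≠ 0 := by nlinarith [sq_nonneg (9 * u - 5)]
  have hu₁ : u + 1 ≠ 0 := fun h ↦ h1 (by linear_combination h)
  have hu₂ : 19 - 9 * u ≠ 0 := fun h ↦ h2 (by linear_combination -h / 9)
  rw [hauptmodul_atkinLehner hu₂ hq, hauptmodul,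
    modularPoly3_div_div _ _ (by positivity) (by positivity), modularPoly3Hom_eq_zero, zero_div]
end

section
/- Let z = e^{2πi/24} and let M₆ = (1/(2√3))·[[3+√3, 3-√3],[-3-√3, 3-√3]] ∈ SL(2,ℝ), and γ₀ = (1/√6)·[[6+√3, √3],[√3, 6-√3]]. Define γ_j = γ₀M₆^j for j = 0,…,5 and write γ_j = [[a_j, b_j],[c_j, d_j]]. Then with P₆ = (-1+i)/(1+√3), one has γ_j P₆ = (-1+5i)/(1+3√3) for all j, and c_j P₆ + d_j = z^{-2j}(z + z⁵ - z⁷). -/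
open Complex Matrix

/-! The vector `(P₆, 1)` is an eigenvector of `M₆` with eigenvalue `z⁻²`, i.e. `M₆` fixes `P₆`
with automorphy factor `z⁻²`, and `γ₀` maps it to `(z + z⁵ - z⁷) • (Q, 1)` with
`Q = (-1 + 5i)/(1 + 3√3)`. Hence `γ₀ M₆ʲ` maps it to `z^{-2j} (z + z⁵ - z⁷) • (Q, 1)`, which is
both claims at once, for every `j`. The two eigenvector identities are identities in
`ℚ(√2, √3, i)`, where `z = e^{πi/4} e^{-πi/6} = √2 (1 + i)(√3 - i)/4`. -/

theorem Matrix.pow_mulVec_of_mulVec_eq_smul {n R : Type*} [Fintype n] [DecidableEq n]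
    [CommSemiring R] {A : Matrix n n R} {v : n → R} {μ : R} (h : A *ᵥ v = μ • v) (j : ℕ) :
    A ^ j *ᵥ v = μ ^ j • v := by
  induction j with
  | zero => simp
  | succ j ih => rw [pow_succ, ← mulVec_mulVec, h, mulVec_smul, ih, smul_smul, pow_succ']

theorem Matrix.fin_two_mulVec_eq_smul_iff {R : Type*} [CommSemiring R]
    {γ : Matrix (Fin 2) (Fin 2) R} {τ σ c : R} :
    γ *ᵥ ![τ, 1] = c • ![σ, 1] ↔ γ 0 0 * τ + γ 0 1 = c * σ ∧ γ 1 0 * τ + γ 1 1 = c := by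
  rw [mulVec_fin_two, funext_iff, Fin.forall_fin_two]
  simp only [cons_val_zero, cons_val_one, cons_val_fin_one, mul_one, Pi.smul_apply, smul_eq_mul]

theorem Matrix.fracLinear_eq_of_mulVec_eq_smul {K : Type*} [Field K]
    {γ : Matrix (Fin 2) (Fin 2) K} {τ σ c : K} (hc : c ≠ 0) (h : γ *ᵥ ![τ, 1] = c • ![σ, 1]) :
    (γ 0 0 * τ + γ 0 1) / (γ 1 0 * τ + γ 1 1) = σ ∧ γ 1 0 * τ + γ 1 1 = c := by
  obtain ⟨h0, h1⟩ := fin_two_mulVec_eq_smul_iff.1 h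
  rw [h0, h1]
  exact ⟨mul_div_cancel_left₀ σ hc, rfl⟩

theorem cexp_two_pi_I_div_24 :
    cexp (2 * Real.pi * I / 24) = (√2 : ℝ) * (1 + I) * ((√3 : ℝ) - I) / 4 := by
  have : 2 * Real.pi * I / 24 = (Real.pi / 4 : ℝ) * I + (-(Real.pi / 6) : ℝ) * I := by
    push_cast; ring
  rw [this, exp_add, exp_mul_I, exp_mul_I, ← ofReal_cos, ← ofReal_sin, ← ofReal_cos,
    ← ofReal_sin, Real.cos_neg, Real.sin_neg, Real.cos_pi_div_four, Real.sin_pi_div_four,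
    Real.cos_pi_div_six, Real.sin_pi_div_six]
  push_cast; ring

theorem cexp_two_pi_I_div_24_zpow_neg_two :
    cexp (2 * Real.pi * I / 24) ^ (-2 : ℤ) = ((√3 : ℝ) - I) / 2 := by
  have : ((-2 : ℤ) : ℂ) * (2 * Real.pi * I / 24) = (-(Real.pi / 6) : ℝ) * I := by
    push_cast; ring
  rw [← exp_int_mul, this, exp_mul_I, ← ofReal_cos, ← ofReal_sin, Real.cos_neg, Real.sin_neg,
    Real.cos_pi_div_six, Real.sin_pi_div_six]
  push_cast; ring

section

variable {s2 s3 : ℂ}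

theorem M₆_mulVec_P₆ (h3 : s3 ^ 2 = 3) :
    ((1 / (2 * s3)) • !![3 + s3, 3 - s3; -3 - s3, 3 - s3]) *ᵥ ![(-1 + I) / (1 + s3), 1]
      = ((s3 - I) / 2) • ![(-1 + I) / (1 + s3), 1] := by
  have : s3 ≠ 0 := by grind
  have : 1 + s3 ≠ 0 := by grind
  rw [fin_two_mulVec_eq_smul_iff]
  simp only [Matrix.smul_apply, of_apply, cons_val', cons_val_zero, cons_val_one, empty_val',
    cons_val_fin_one, smul_eq_mul]
  constructor <;> field_simp <;> grind [I_sq]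

theorem γ₀_mulVec_P₆ (h2 : s2 ^ 2 = 2) (h3 : s3 ^ 2 = 3) :
    ((1 / (s2 * s3)) • !![6 + s3, s3; s3, 6 - s3]) *ᵥ ![(-1 + I) / (1 + s3), 1]
      = (s2 * (3 * s3 - 1 + (s3 - 1) * I) / 4) • ![(-1 + 5 * I) / (1 + 3 * s3), 1] := by
  have : s2 ≠ 0 := by grind
  have : s3 ≠ 0 := by grind
  have : 1 + s3 ≠ 0 := by grind
  have : 1 + 3 * s3 ≠ 0 := by grind
  rw [fin_two_mulVec_eq_smul_iff]
  simp only [Matrix.smul_apply, of_apply, cons_val', cons_val_zero, cons_val_one, empty_val',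
    cons_val_fin_one, smul_eq_mul]
  constructor <;> field_simp <;> grind [I_sq]

variable {z : ℂ}

theorem add_pow_five_sub_pow_seven_eq (h2 : s2 ^ 2 = 2) (h3 : s3 ^ 2 = 3)
    (hz : z = s2 * (1 + I) * (s3 - I) / 4) :
    z + z ^ 5 - z ^ 7 = s2 * (3 * s3 - 1 + (s3 - 1) * I) / 4 := by
  have hz2 : z ^ 2 = (s3 + I) / 2 := by grind [I_sq]
  have hz4 : z ^ 4 = (1 + s3 * I) / 2 := by grind [I_sq]
  have hz6 : z ^ 6 = I := by grind [I_sq]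
  grind [I_sq]

theorem add_pow_five_sub_pow_seven_ne_zero (h2 : s2 ^ 2 = 2) (h3 : s3 ^ 2 = 3)
    (hz : z = s2 * (1 + I) * (s3 - I) / 4) :
    z + z ^ 5 - z ^ 7 ≠ 0 := by
  rw [add_pow_five_sub_pow_seven_eq h2 h3 hz]
  grind [I_sq]

end

/-- Properties of the coset representatives `γⱼ = γ₀M₆ʲ` for the Hecke operator `T₅`
on `X₆*(1)`: they all map the elliptic point `P₆ = (-1+i)/(1+√3)` to
`(-1+5i)/(1+3√3)`, and the automorphy factors satisfy
`cⱼP₆ + dⱼ = z^{-2j}(z + z⁵ - z⁷)` with `z = e^{2πi/24}`. -/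
theorem coset_reps_T5_X6 :
    let z : ℂ := Complex.exp (2 * Real.pi * I / 24)
    let s3 : ℂ := (Real.sqrt 3 : ℝ)
    let M₆ : Matrix (Fin 2) (Fin 2) ℂ :=
      (1 / (2 * s3)) • !![3 + s3, 3 - s3; -3 - s3, 3 - s3]
    let γ₀ : Matrix (Fin 2) (Fin 2) ℂ :=
      (1 / (Real.sqrt 6 : ℝ)) • !![6 + s3, s3; s3, 6 - s3]
    let P₆ : ℂ := (-1 + I) / (1 + s3)
    ∀ j : ℕ, j ≤ 5 →
      let γ := γ₀ * M₆ ^ j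
      (γ 0 0 * P₆ + γ 0 1) / (γ 1 0 * P₆ + γ 1 1) = (-1 + 5 * I) / (1 + 3 * s3) ∧
      γ 1 0 * P₆ + γ 1 1 = z ^ (-(2 * (j : ℤ))) * (z + z ^ 5 - z ^ 7) := by
  intro z s3 M₆ γ₀ P₆ j _ γ
  have h2 : ((√2 : ℝ) : ℂ) ^ 2 = 2 := by rw [← ofReal_pow, Real.sq_sqrt zero_le_two, ofReal_ofNat]
  have h3 : s3 ^ 2 = 3 := by rw [← ofReal_pow, Real.sq_sqrt (by norm_num), ofReal_ofNat]
  have hM : M₆ *ᵥ ![P₆, 1] = z ^ (-2 : ℤ) • ![P₆, 1] := by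
    rw [cexp_two_pi_I_div_24_zpow_neg_two]
    exact M₆_mulVec_P₆ h3
  have hγ₀ : γ₀ *ᵥ ![P₆, 1] = (z + z ^ 5 - z ^ 7) • ![(-1 + 5 * I) / (1 + 3 * s3), 1] := by
    have h6 : ((√6 : ℝ) : ℂ) = (√2 : ℝ) * s3 := by
      rw [show (6 : ℝ) = 2 * 3 by norm_num, Real.sqrt_mul zero_le_two, ofReal_mul]
    rw [add_pow_five_sub_pow_seven_eq h2 h3 cexp_two_pi_I_div_24, ← γ₀_mulVec_P₆ h2 h3, ← h6]
    simp only [γ₀, P₆, RCLike.real_smul_eq_coe_smul (K := ℂ)]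
    push_cast
    rfl
  have hw : z + z ^ 5 - z ^ 7 ≠ 0 := add_pow_five_sub_pow_seven_ne_zero h2 h3 cexp_two_pi_I_div_24
  refine fracLinear_eq_of_mulVec_eq_smul (mul_ne_zero (zpow_ne_zero _ (exp_ne_zero _)) hw) ?_
  rw [← mulVec_mulVec, pow_mulVec_of_mulVec_eq_smul hM, mulVec_smul, hγ₀, smul_smul,
    ← zpow_natCast, ← _root_.zpow_mul, neg_mul]
end
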